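/- If T : E → F is an order bounded disjointness-preserving operator whose modulus |T| is u-L-weakly compact, then |T| (and hence T) is u-M-weakly compact: for any disjoint sequence (xₙ) in the unit ball of E, the images |T|xₙ are pairwise disjoint and lie in sol(|T|(U)), hence are un-null. -/

import Mathlib

open Filter

/-- A sequence in a normed lattice is unbounded norm (un-) convergent to `0`. -/
def UnNullSeq {F : Type*} [NormedAddCommGroup F] [Lattice F] [HasSolidNorm F] [IsOrderedAddMonoid F] (y : ℕ → F) : Prop :=
  ∀ w : F, 0 ≤ w → Tendsto (fun n => ‖|y n| ⊓ w‖) atTop (nhds 0)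

/-- `T` is unbounded M-weakly compact. -/
def UMWeaklyCompact {E F : Type*} [NormedAddCommGroup E] [Lattice E] [HasSolidNorm E] [IsOrderedAddMonoid E] [NormedSpace ℝ E]
    [NormedAddCommGroup F] [Lattice F] [HasSolidNorm F] [IsOrderedAddMonoid F] [NormedSpace ℝ F] (T : E →L[ℝ] F) : Prop :=
  ∀ x : ℕ → E, (∃ C, ∀ n, ‖x n‖ ≤ C) → (∀ n m, n ≠ m → |x n| ⊓ |x m| = 0) →
    UnNullSeq (fun n => T (x n))

/-- `T` is unbounded L-weakly compact. -/
def ULWeaklyCompact {E F : Type*} [NormedAddCommGroup E] [Lattice E] [HasSolidNorm E] [IsOrderedAddMonoid E] [NormedSpace ℝ E]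
    [NormedAddCommGroup F] [Lattice F] [HasSolidNorm F] [IsOrderedAddMonoid F] [NormedSpace ℝ F] (T : E →L[ℝ] F) : Prop :=
  ∀ y : ℕ → F, (∀ n, ∃ u : E, ‖u‖ ≤ 1 ∧ |y n| ≤ |T u|) →
    (∀ n m, n ≠ m → |y n| ⊓ |y m| = 0) → UnNullSeq y

/-!
Since `|R x| = |T x|` and `T` preserves disjointness, so does `R`. A bounded disjoint sequence
`(xₙ)` is `N • zₙ` for a natural number `N` and a sequence `(zₙ)` in the unit ball, which is again
disjoint because `|N • a| = N • |a|` in every lattice-ordered group (no compatibility between the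
real scalars and the order is assumed, so only natural multiples can be used). The images `R zₙ`
are disjoint and lie in the solid hull of `R(U)`, hence un-null by u-L-weak compactness, and so are
`R xₙ = N • R zₙ`. Un-nullness only depends on `|·|`, so `T` inherits it from `R`.
-/

section LatticeOrderedAddCommGroup

variable {α : Type*} [Lattice α] [AddCommGroup α] [IsOrderedAddMonoid α] {a b c u v : α}

lemma add_inf_le_inf_add_inf (ha : 0 ≤ a) (hb : 0 ≤ b) (hc : 0 ≤ c) :
    (a + b) ⊓ c ≤ a ⊓ c + b ⊓ c := by
  rw [add_inf, inf_add, inf_add]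
  refine le_inf (le_inf inf_le_left ?_) (le_inf ?_ ?_)
  · exact inf_le_right.trans (le_add_of_nonneg_right hb)
  · exact inf_le_right.trans (le_add_of_nonneg_left ha)
  · exact inf_le_right.trans (le_add_of_nonneg_left hc)

lemma nsmul_inf_le_nsmul_inf (ha : 0 ≤ a) (hb : 0 ≤ b) (n : ℕ) : (n • a) ⊓ b ≤ n • (a ⊓ b) := by
  induction n with
  | zero => simp
  | succ n ih =>
    rw [succ_nsmul, succ_nsmul]
    exact (add_inf_le_inf_add_inf (nsmul_nonneg ha n) ha hb).trans (add_le_add_left ih _)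

lemma nsmul_inf_nsmul_eq_zero (hu : 0 ≤ u) (hv : 0 ≤ v) (huv : u ⊓ v = 0) (n m : ℕ) :
    (n • u) ⊓ (m • v) = 0 := by
  have hmv : (m • v) ⊓ u ≤ 0 := by
    simpa only [inf_comm v u, huv, nsmul_zero] using nsmul_inf_le_nsmul_inf hv hu m
  refine le_antisymm ?_ (le_inf (nsmul_nonneg hu n) (nsmul_nonneg hv m))
  calc (n • u) ⊓ (m • v) ≤ n • (u ⊓ m • v) := nsmul_inf_le_nsmul_inf hu (nsmul_nonneg hv m) n
    _ ≤ n • (0 : α) := nsmul_le_nsmul_right (by rwa [inf_comm]) n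
    _ = 0 := nsmul_zero n

lemma abs_sub_eq_add_of_inf_eq_zero (hu : 0 ≤ u) (hv : 0 ≤ v) (huv : u ⊓ v = 0) :
    |u - v| = u + v := by
  have hsup : 2 • u ⊔ 2 • v = 2 • u + 2 • v := by
    rw [← inf_add_sup (2 • u) (2 • v), nsmul_inf_nsmul_eq_zero hu hv huv, zero_add]
  calc |u - v| = (2 • u ⊔ 2 • v) - (u + v) := by
        rw [sup_sub, abs, neg_sub, two_nsmul, two_nsmul]; congr 1 <;> abel
    _ = u + v := by rw [hsup, two_nsmul, two_nsmul]; abel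

lemma abs_nsmul_eq_nsmul_abs (n : ℕ) (a : α) : |n • a| = n • |a| := by
  calc |n • a| = |n • a⁺ - n • a⁻| := by rw [← nsmul_sub, posPart_sub_negPart]
    _ = n • a⁺ + n • a⁻ :=
      abs_sub_eq_add_of_inf_eq_zero (nsmul_nonneg (posPart_nonneg a) n)
        (nsmul_nonneg (negPart_nonneg a) n)
        (nsmul_inf_nsmul_eq_zero (posPart_nonneg a) (negPart_nonneg a)
          (posPart_inf_negPart_eq_zero a) n n)
    _ = n • |a| := by rw [← nsmul_add, posPart_add_negPart]

lemma abs_inf_abs_eq_zero_of_nsmul {n : ℕ} (hn : n ≠ 0) (h : |n • a| ⊓ |n • b| = 0) :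
    |a| ⊓ |b| = 0 := by
  have hnn : 0 ≤ |a| ⊓ |b| := le_inf (abs_nonneg a) (abs_nonneg b)
  refine le_antisymm ?_ hnn
  calc |a| ⊓ |b| ≤ n • (|a| ⊓ |b|) := le_self_nsmul hnn hn
    _ ≤ (n • |a|) ⊓ (n • |b|) :=
      le_inf (nsmul_le_nsmul_right inf_le_left n) (nsmul_le_nsmul_right inf_le_right n)
    _ = 0 := by rwa [← abs_nsmul_eq_nsmul_abs, ← abs_nsmul_eq_nsmul_abs]

end LatticeOrderedAddCommGroup

lemma exists_nsmul_eq_of_norm_le {E : Type*} [NormedAddCommGroup E] [NormedSpace ℝ E] (C : ℝ) :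
    ∃ N : ℕ, N ≠ 0 ∧ ∀ x : E, ‖x‖ ≤ C → ∃ z : E, ‖z‖ ≤ 1 ∧ N • z = x := by
  obtain ⟨N, hCN⟩ := exists_nat_ge C
  refine ⟨N + 1, N.succ_ne_zero, fun x hx => ⟨((N + 1 : ℕ) : ℝ)⁻¹ • x, ?_, ?_⟩⟩
  · rw [norm_smul, norm_inv, RCLike.norm_natCast, inv_mul_le_one₀ (by positivity)]
    push_cast
    linarith
  · rw [← Nat.cast_smul_eq_nsmul ℝ, smul_inv_smul₀ (by positivity)]

section NormedLattice

variable {F : Type*} [NormedAddCommGroup F] [Lattice F] [HasSolidNorm F] [IsOrderedAddMonoid F]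

lemma UnNullSeq.nsmul {y : ℕ → F} (hy : UnNullSeq y) (N : ℕ) : UnNullSeq (fun k => N • y k) := by
  intro w hw
  refine squeeze_zero (fun _ => norm_nonneg _) (fun k => ?_)
    (by simpa using (hy w hw).const_mul (N : ℝ))
  have hle : |N • y k| ⊓ w ≤ N • (|y k| ⊓ w) := by
    rw [abs_nsmul_eq_nsmul_abs]
    exact nsmul_inf_le_nsmul_inf (abs_nonneg _) hw N
  calc ‖|N • y k| ⊓ w‖ ≤ ‖N • (|y k| ⊓ w)‖ :=
        norm_le_norm_of_abs_le_abs <| by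
          rwa [abs_of_nonneg (le_inf (abs_nonneg _) hw),
            abs_of_nonneg (nsmul_nonneg (le_inf (abs_nonneg _) hw) N)]
    _ ≤ N * ‖|y k| ⊓ w‖ := norm_nsmul_le

lemma UnNullSeq.of_abs_eq {y y' : ℕ → F} (hy : UnNullSeq y) (h : ∀ n, |y n| = |y' n|) :
    UnNullSeq y' := by
  simpa only [UnNullSeq, h] using hy

end NormedLattice

section Operators

variable {E F : Type*} [NormedAddCommGroup E] [Lattice E] [HasSolidNorm E] [IsOrderedAddMonoid E]
  [NormedSpace ℝ E] [NormedAddCommGroup F] [Lattice F] [HasSolidNorm F] [IsOrderedAddMonoid F]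
  [NormedSpace ℝ F]

lemma UMWeaklyCompact.of_abs_eq {R T : E →L[ℝ] F} (hR : UMWeaklyCompact R)
    (h : ∀ x, |R x| = |T x|) : UMWeaklyCompact T :=
  fun x hbdd hx => (hR x hbdd hx).of_abs_eq fun n => h (x n)

lemma uMWeaklyCompact_of_uLWeaklyCompact {R : E →L[ℝ] F}
    (hdisj : ∀ x y : E, |x| ⊓ |y| = 0 → |R x| ⊓ |R y| = 0) (hRL : ULWeaklyCompact R) :
    UMWeaklyCompact R := by
  rintro x ⟨C, hC⟩ hx
  obtain ⟨N, hN, hscale⟩ := exists_nsmul_eq_of_norm_le (E := E) C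
  choose z hz hxz using fun n => hscale (x n) (hC n)
  have hzdisj : ∀ n m, n ≠ m → |R (z n)| ⊓ |R (z m)| = 0 := fun n m hnm =>
    hdisj _ _ (abs_inf_abs_eq_zero_of_nsmul hN (by simpa only [hxz] using hx n m hnm))
  have hRz : UnNullSeq (fun n => R (z n)) := hRL _ (fun n => ⟨z n, hz n, le_rfl⟩) hzdisj
  simpa only [← map_nsmul, hxz] using hRz.nsmul N

end Operators

theorem uMWeaklyCompact_of_modulus_uLWeaklyCompact_general
    {E F : Type*} [NormedAddCommGroup E] [Lattice E] [HasSolidNorm E] [IsOrderedAddMonoid E] [NormedSpace ℝ E]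
    [NormedAddCommGroup F] [Lattice F] [HasSolidNorm F] [IsOrderedAddMonoid F] [NormedSpace ℝ F]
    (T R : E →L[ℝ] F)
    (hdisj : ∀ x y : E, |x| ⊓ |y| = 0 → |T x| ⊓ |T y| = 0)
    (hmod : ∀ x : E, |R x| = |T x|)
    (hRL : ULWeaklyCompact R) :
    UMWeaklyCompact R ∧ UMWeaklyCompact T := by
  have hR : UMWeaklyCompact R :=
    uMWeaklyCompact_of_uLWeaklyCompact (fun x y hxy => by rw [hmod, hmod]; exact hdisj x y hxy) hRL
  exact ⟨hR, hR.of_abs_eq hmod⟩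

/-- if `T` is order bounded and disjointness-preserving, with
modulus `R = |T|` (a lattice homomorphism satisfying `|R x| = |T x|`), and `R`
is u-L-weakly compact, then both `R` and `T` are u-M-weakly compact. -/
theorem uMWeaklyCompact_of_modulus_uLWeaklyCompact
    {E F : Type*} [NormedAddCommGroup E] [Lattice E] [HasSolidNorm E] [IsOrderedAddMonoid E] [NormedSpace ℝ E] [CompleteSpace E]
    [NormedAddCommGroup F] [Lattice F] [HasSolidNorm F] [IsOrderedAddMonoid F] [NormedSpace ℝ F] [CompleteSpace F]
    (T R : E →L[ℝ] F)
    (hdisj : ∀ x y : E, |x| ⊓ |y| = 0 → |T x| ⊓ |T y| = 0)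
    (hRhom : ∀ x y : E, R (x ⊔ y) = R x ⊔ R y)
    (hmod : ∀ x : E, |R x| = |T x|)
    (hRL : ULWeaklyCompact R) :
    UMWeaklyCompact R ∧ UMWeaklyCompact T :=
  uMWeaklyCompact_of_modulus_uLWeaklyCompact_general T R hdisj hmod hRL
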